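/- Let D be a 4-plane topological drawing of a finite simple graph, and let L(e_{αβ}, f_{αβ}) be a lens of D with x(e_{αβ}) ≤ x(f_{αβ}). Then: (1) if x(f_{αβ}) − x(e_{αβ}) ≥ 2, then either x(e_{αβ}) = 0, or x(e_{αβ}) = 1 and x(f_{αβ}) = 3; and (2) if x(e_{αβ}) = 1 and x(f_{αβ}) = 3, then one of α, β is a common endpoint of the edges e and f (i.e., the lens is bounded by adjacent arcs). -/
import Mathlib


open unitInterval

/-- Two sets `A`, `B` in the plane *cross transversally* at `p`:
`p` is a common point and in every neighborhood `U` of `p` there are points of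
`B` off `A` lying in two different connected components of `U \ A`
(i.e. locally `B` passes to both sides of `A` at `p`). -/
def CrossesAt (A B : Set (ℝ × ℝ)) (p : ℝ × ℝ) : Prop :=
  p ∈ A ∩ B ∧ ∀ U ∈ nhds p, ∃ q₁ ∈ B ∩ (U \ A), ∃ q₂ ∈ B ∩ (U \ A),
    q₂ ∉ connectedComponentIn (U \ A) q₁

/-- A topological drawing of a simple graph `G` in the plane: vertices are mapped to
pairwise distinct points, each edge `uv` to a Jordan arc joining the images of `u` and `v`
and avoiding the images of all other vertices; arcs of distinct edges have finitely many
common points, each common point of two arcs is a common endpoint or a transversal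
crossing, and no point that is not the image of a vertex lies on three arcs. -/
structure TopDrawing {V : Type*} (G : SimpleGraph V) where
  vtx : V → ℝ × ℝ
  vtx_inj : Function.Injective vtx
  arc : ∀ ⦃u v : V⦄, G.Adj u v → Path (vtx u) (vtx v)
  arc_symm : ∀ ⦃u v : V⦄ (h : G.Adj u v), arc h.symm = (arc h).symm
  arc_inj : ∀ ⦃u v : V⦄ (h : G.Adj u v), Function.Injective (arc h)
  arc_avoids : ∀ ⦃u v : V⦄ (h : G.Adj u v) (w : V),
    vtx w ∈ Set.range (arc h) → w = u ∨ w = v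
  inter_finite : ∀ ⦃u v a b : V⦄ (h₁ : G.Adj u v) (h₂ : G.Adj a b),
    s(u, v) ≠ s(a, b) → (Set.range (arc h₁) ∩ Set.range (arc h₂)).Finite
  transversal : ∀ ⦃u v a b : V⦄ (h₁ : G.Adj u v) (h₂ : G.Adj a b),
    s(u, v) ≠ s(a, b) → ∀ p ∈ Set.range (arc h₁) ∩ Set.range (arc h₂),
    (¬ ∃ w, vtx w = p ∧ (w = u ∨ w = v) ∧ (w = a ∨ w = b)) →
    CrossesAt (Set.range (arc h₁)) (Set.range (arc h₂)) p
  no_triple : ∀ p : ℝ × ℝ, p ∉ Set.range vtx →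
    ∀ ⦃u₁ v₁ u₂ v₂ u₃ v₃ : V⦄ (h₁ : G.Adj u₁ v₁) (h₂ : G.Adj u₂ v₂) (h₃ : G.Adj u₃ v₃),
    p ∈ Set.range (arc h₁) → p ∈ Set.range (arc h₂) → p ∈ Set.range (arc h₃) →
    s(u₁, v₁) = s(u₂, v₂) ∨ s(u₁, v₁) = s(u₃, v₃) ∨ s(u₂, v₂) = s(u₃, v₃)

namespace TopDrawing

variable {V : Type*} {G : SimpleGraph V}

/-- `p` is a common endpoint of the arcs of edges `uv` and `ab`. -/
def CommonEndpoint (D : TopDrawing G) (u v a b : V) (p : ℝ × ℝ) : Prop :=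
  ∃ w, D.vtx w = p ∧ (w = u ∨ w = v) ∧ (w = a ∨ w = b)

/-- The set of crossings of a drawing: common points of the arcs of two distinct edges
that are not common endpoints. -/
def crossingSet (D : TopDrawing G) : Set (ℝ × ℝ) :=
  {p | ∃ (u v a b : V) (h₁ : G.Adj u v) (h₂ : G.Adj a b), s(u, v) ≠ s(a, b) ∧
    p ∈ Set.range (D.arc h₁) ∧ p ∈ Set.range (D.arc h₂) ∧ ¬ D.CommonEndpoint u v a b p}

/-- The number of crossings lying on the arc of the edge `uv`. -/
noncomputable def edgeCrossings (D : TopDrawing G) {u v : V} (h : G.Adj u v) : ℕ :=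
  (D.crossingSet ∩ Set.range (D.arc h)).ncard

/-- The total number of crossings of a drawing. -/
noncomputable def totalCrossings (D : TopDrawing G) : ℕ := D.crossingSet.ncard

/-- The number of crossings between the arcs of the two edges `uv` and `ab`
(common points that are not common endpoints). -/
noncomputable def pairCrossings (D : TopDrawing G) {u v a b : V}
    (h₁ : G.Adj u v) (h₂ : G.Adj a b) : ℕ :=
  {p | p ∈ Set.range (D.arc h₁) ∧ p ∈ Set.range (D.arc h₂) ∧
    ¬ D.CommonEndpoint u v a b p}.ncard

/-- A drawing is `k`-plane if every edge has at most `k` crossings. -/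
def IsKPlane (D : TopDrawing G) (k : ℕ) : Prop :=
  ∀ ⦃u v : V⦄ (h : G.Adj u v), D.edgeCrossings h ≤ k

/-- A drawing is simple if the arcs of any two distinct edges have at most one
common point. -/
def IsSimple (D : TopDrawing G) : Prop :=
  ∀ ⦃u v a b : V⦄ (h₁ : G.Adj u v) (h₂ : G.Adj a b), s(u, v) ≠ s(a, b) →
    (Set.range (D.arc h₁) ∩ Set.range (D.arc h₂)).Subsingleton

/-- The subarcs of the edges `uv` and `ab` determined by parameters `s₁,t₁` resp. `s₂,t₂`
form a lens: the points `α = arc h₁ s₁ = arc h₂ s₂` and `β = arc h₁ t₁ = arc h₂ t₂` are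
two distinct common points of the two arcs, and the two subarcs between `α` and `β` have
no common point other than `α` and `β`. -/
def IsLens (D : TopDrawing G) {u v a b : V} (h₁ : G.Adj u v) (h₂ : G.Adj a b)
    (s₁ t₁ s₂ t₂ : unitInterval) : Prop :=
  s(u, v) ≠ s(a, b) ∧
  D.arc h₁ s₁ = D.arc h₂ s₂ ∧ D.arc h₁ t₁ = D.arc h₂ t₂ ∧
  D.arc h₁ s₁ ≠ D.arc h₁ t₁ ∧
  (D.arc h₁ '' Set.uIcc s₁ t₁) ∩ (D.arc h₂ '' Set.uIcc s₂ t₂) =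
    {D.arc h₁ s₁, D.arc h₁ t₁}

/-- The drawing contains a lens. -/
def HasLens (D : TopDrawing G) : Prop :=
  ∃ (u v a b : V) (h₁ : G.Adj u v) (h₂ : G.Adj a b) (s₁ t₁ s₂ t₂ : unitInterval),
    D.IsLens h₁ h₂ s₁ t₁ s₂ t₂

/-- The number of crossings of the drawing lying on the subarc of the edge `uv` between
the parameters `s` and `t`, excluding the endpoints of the subarc. -/
noncomputable def subarcCrossings (D : TopDrawing G) {u v : V} (h : G.Adj u v)
    (s t : unitInterval) : ℕ :=
  ((D.crossingSet ∩ D.arc h '' Set.uIcc s t) \ {D.arc h s, D.arc h t}).ncard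

end TopDrawing

private lemma sym2_eq_of_mem' {V : Type} {w₁ w₂ u v : V} (hne : w₁ ≠ w₂)
    (h1 : w₁ = u ∨ w₁ = v) (h2 : w₂ = u ∨ w₂ = v) : s(u, v) = s(w₁, w₂) := by
  rcases h1 with rfl | rfl <;> rcases h2 with rfl | rfl
  · exact (hne rfl).elim
  · rfl
  · exact Sym2.eq_swap
  · exact (hne rfl).elim

private lemma crossingSet_finite' {V : Type} [Fintype V] {G : SimpleGraph V}
    (D : TopDrawing G) : D.crossingSet.Finite := by
  have hsub : D.crossingSet ⊆ ⋃ (q : V × V × V × V),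
      {p | ∃ (h₁ : G.Adj q.1 q.2.1) (h₂ : G.Adj q.2.2.1 q.2.2.2),
        s(q.1, q.2.1) ≠ s(q.2.2.1, q.2.2.2) ∧
        p ∈ Set.range (D.arc h₁) ∩ Set.range (D.arc h₂)} := by
    rintro p ⟨u, v, a, b, h₁, h₂, hne, hp₁, hp₂, -⟩
    exact Set.mem_iUnion.2 ⟨(u, v, a, b), h₁, h₂, hne, hp₁, hp₂⟩
  refine Set.Finite.subset (Set.finite_iUnion ?_) hsub
  rintro ⟨u, v, a, b⟩
  by_cases h : ∃ (h₁ : G.Adj u v) (h₂ : G.Adj a b), s(u, v) ≠ s(a, b)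
  · obtain ⟨h₁, h₂, hne⟩ := h
    exact (D.inter_finite h₁ h₂ hne).subset (by rintro p ⟨ha, hb, hc, hp⟩; exact hp)
  · refine Set.finite_empty.subset ?_
    rintro p ⟨h₁, h₂, hne, -⟩
    exact absurd ⟨h₁, h₂, hne⟩ h

/-- In a 4-plane drawing, for a lens `L(e_{αβ}, f_{αβ})` with `x(e_{αβ}) ≤ x(f_{αβ})`:
(1) if `x(f_{αβ}) − x(e_{αβ}) ≥ 2` then `x(e_{αβ}) = 0`, or `x(e_{αβ}) = 1` and
`x(f_{αβ}) = 3`; and (2) if `x(e_{αβ}) = 1` and `x(f_{αβ}) = 3` then one of `α`, `β` is a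
common endpoint of the two edges. -/
theorem lens_in_fourPlane_drawing
    {V : Type} [Fintype V] {G : SimpleGraph V} (D : TopDrawing G)
    (h4 : D.IsKPlane 4)
    {u v a b : V} (h₁ : G.Adj u v) (h₂ : G.Adj a b) (s₁ t₁ s₂ t₂ : unitInterval)
    (hlens : D.IsLens h₁ h₂ s₁ t₁ s₂ t₂)
    (hle : D.subarcCrossings h₁ s₁ t₁ ≤ D.subarcCrossings h₂ s₂ t₂) :
    (D.subarcCrossings h₁ s₁ t₁ + 2 ≤ D.subarcCrossings h₂ s₂ t₂ →
      D.subarcCrossings h₁ s₁ t₁ = 0 ∨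
      (D.subarcCrossings h₁ s₁ t₁ = 1 ∧ D.subarcCrossings h₂ s₂ t₂ = 3)) ∧
    (D.subarcCrossings h₁ s₁ t₁ = 1 ∧ D.subarcCrossings h₂ s₂ t₂ = 3 →
      D.CommonEndpoint u v a b (D.arc h₁ s₁) ∨
      D.CommonEndpoint u v a b (D.arc h₁ t₁)) := by

  obtain ⟨hne, hα2, hβ2, hαβ, hinter⟩ := hlens
  set A := D.arc h₂ s₂ with hA
  set B := D.arc h₂ t₂ with hB
  have hAB : A ≠ B := fun h => hαβ (by rw [hα2, hβ2, h])
  set S : Set (ℝ × ℝ) :=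
    (D.crossingSet ∩ D.arc h₂ '' Set.uIcc s₂ t₂) \ {A, B} with hS
  set E : Set (ℝ × ℝ) := D.crossingSet ∩ Set.range (D.arc h₂) with hE
  have hEfin : E.Finite := (crossingSet_finite' D).subset Set.inter_subset_left
  have hSE : S ⊆ E := by
    rintro p ⟨⟨hp1, hp2⟩, -⟩
    exact ⟨hp1, Set.image_subset_range _ _ hp2⟩
  have hSfin : S.Finite := hEfin.subset hSE
  have hE4 : E.ncard ≤ 4 := h4 h₂
  have hnotboth : ¬ (D.CommonEndpoint u v a b (D.arc h₁ s₁) ∧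
      D.CommonEndpoint u v a b (D.arc h₁ t₁)) := by
    rintro ⟨⟨w₁, hw₁, hw₁uv, hw₁ab⟩, ⟨w₂, hw₂, hw₂uv, hw₂ab⟩⟩
    have hw : w₁ ≠ w₂ := fun h => hαβ (by rw [← hw₁, ← hw₂, h])
    exact hne ((sym2_eq_of_mem' hw hw₁uv hw₂uv).trans
      (sym2_eq_of_mem' hw hw₁ab hw₂ab).symm)
  have hAE : ¬ D.CommonEndpoint u v a b (D.arc h₁ s₁) → A ∈ E ∧ A ∉ S := by
    intro hc
    refine ⟨⟨⟨u, v, a, b, h₁, h₂, hne, ⟨s₁, hα2⟩, ⟨s₂, rfl⟩, hα2 ▸ hc⟩, ⟨s₂, rfl⟩⟩,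
      fun h => h.2 (Or.inl rfl)⟩
  have hBE : ¬ D.CommonEndpoint u v a b (D.arc h₁ t₁) → B ∈ E ∧ B ∉ S := by
    intro hc
    refine ⟨⟨⟨u, v, a, b, h₁, h₂, hne, ⟨t₁, hβ2⟩, ⟨t₂, rfl⟩, hβ2 ▸ hc⟩, ⟨t₂, rfl⟩⟩,
      fun h => h.2 (Or.inr rfl)⟩
  have step1 : ∀ c, c ∈ E → c ∉ S → S.ncard + 1 ≤ 4 := by
    intro c hcE hcS
    calc S.ncard + 1 = (insert c S).ncard := (Set.ncard_insert_of_notMem hcS hSfin).symm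
      _ ≤ E.ncard := Set.ncard_le_ncard (Set.insert_subset hcE hSE) hEfin
      _ ≤ 4 := hE4
  have hxf : D.subarcCrossings h₂ s₂ t₂ = S.ncard := rfl
  have hf3 : D.subarcCrossings h₂ s₂ t₂ ≤ 3 := by
    rw [hxf]
    by_cases hc : D.CommonEndpoint u v a b (D.arc h₁ s₁)
    · have hc' : ¬ D.CommonEndpoint u v a b (D.arc h₁ t₁) := fun h => hnotboth ⟨hc, h⟩
      obtain ⟨h1, h2⟩ := hBE hc'
      have := step1 B h1 h2; omega
    · obtain ⟨h1, h2⟩ := hAE hc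
      have := step1 A h1 h2; omega
  have step2 : ¬ D.CommonEndpoint u v a b (D.arc h₁ s₁) →
      ¬ D.CommonEndpoint u v a b (D.arc h₁ t₁) → S.ncard + 2 ≤ 4 := by
    intro hcA hcB
    obtain ⟨hA1, hA2⟩ := hAE hcA
    obtain ⟨hB1, hB2⟩ := hBE hcB
    have hAiB : A ∉ insert B S := by
      simp only [Set.mem_insert_iff]
      rintro (h | h)
      · exact hAB h
      · exact hA2 h
    calc S.ncard + 2 = (insert B S).ncard + 1 := by
          rw [Set.ncard_insert_of_notMem hB2 hSfin]
      _ = (insert A (insert B S)).ncard :=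
          (Set.ncard_insert_of_notMem hAiB (hSfin.insert B)).symm
      _ ≤ E.ncard := Set.ncard_le_ncard
          (Set.insert_subset hA1 (Set.insert_subset hB1 hSE)) hEfin
      _ ≤ 4 := hE4
  constructor
  · intro hgap
    omega
  · rintro ⟨he1, hf1⟩
    by_contra hcon
    push_neg at hcon
    have := step2 hcon.1 hcon.2
    rw [hxf] at hf1
    omega
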